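/- The map T restricted to (0, 1/2] is a strictly increasing bijection onto (0, 1]; define y_0 = 1/2 and, for n ≥ 0, let y_{n+1} be the unique point of (0, 1/2] with T(y_{n+1}) = y_n. Then there exist constants υ1 ≥ υ2 > 0 such that e^{−υ1 n^γ} ≤ y_n ≤ e^{−υ2 n^γ} for every integer n ≥ 1. -/

import Mathlib

/-!
Write `ℓ = -log x` and `c = (log 2)^β`. Since `T x = x (1 + c / ℓ^β)`, one backward step of `T`
increases `ℓ` by `log (1 + c / ℓ^β)`, which lies between `c / (2 ℓ^β)` and `c / ℓ^β` because
`c / ℓ^β ≤ 1` on `(0, 1/2]`. By the tangent-line bounds for the convex power `t ↦ t^(β+1)`,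
the quantity `ℓ^(β+1) = ℓ^(1/γ)` therefore grows at each step by an amount between two positive
constants, so `(-log y_n)^(1/γ)` is comparable to `n`, that is `-log y_n ≍ n^γ`.
-/

open Set

/-- The interval map `T` of the example: `T(x) = x (1 + c / |log x|^β)` on `(0, 1/2]`
with `β = 1/γ - 1`, `c = (log 2)^β`, `T(x) = 2x - 1` on `(1/2, 1]`, and `T(0) = 0`. -/
noncomputable def Tmap (γ : ℝ) (x : ℝ) : ℝ :=
  if x ≤ 0 then 0
  else if x ≤ 1 / 2 then x * (1 + (Real.log 2) ^ (1 / γ - 1) / |Real.log x| ^ (1 / γ - 1))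
  else 2 * x - 1

open Real

section PowerIncrements

variable {p c x y : ℝ}

lemma mul_rpow_sub_one_mul_sub_le_rpow_sub_rpow (hx : 0 < x) (hy : 0 ≤ y) (hp : 1 ≤ p) :
    p * x ^ (p - 1) * (y - x) ≤ y ^ p - x ^ p := by
  have hbern := one_add_mul_self_le_rpow_one_add (s := y / x - 1) (by
    have : 0 ≤ y / x := by positivity
    linarith) hp
  rw [add_sub_cancel, div_rpow hy hx.le, le_div_iff₀ (by positivity)] at hbern
  rw [rpow_sub_one hx.ne']
  have : x ^ p * (y / x - 1) = x ^ p / x * (y - x) := by field_simp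
  nlinarith

lemma rpow_sub_rpow_le_of_sub_le (hx : 0 < x) (hxy : x ≤ y) (hp : 1 ≤ p)
    (h : y - x ≤ c / y ^ (p - 1)) : y ^ p - x ^ p ≤ p * c := by
  have hy : 0 < y := hx.trans_le hxy
  have tangent := mul_rpow_sub_one_mul_sub_le_rpow_sub_rpow hy hx.le hp
  rw [le_div_iff₀ (by positivity)] at h
  nlinarith

lemma le_rpow_sub_rpow_of_le_sub (hx : 0 < x) (hxy : x ≤ y) (hy2 : y ≤ 2 * x) (hp : 1 ≤ p)
    (hc : 0 ≤ c) (h : c / (2 * y ^ (p - 1)) ≤ y - x) : p * c / 2 ^ p ≤ y ^ p - x ^ p := by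
  have hy : 0 < y := hx.trans_le hxy
  have ratio : y ^ (p - 1) ≤ 2 ^ (p - 1) * x ^ (p - 1) := by
    rw [← mul_rpow zero_le_two hx.le]
    exact rpow_le_rpow hy.le hy2 (by linarith)
  have h2p : (2 : ℝ) ^ p = 2 * 2 ^ (p - 1) := by
    rw [rpow_sub_one two_ne_zero]; ring
  calc p * c / 2 ^ p = p * x ^ (p - 1) * (c / (2 * (2 ^ (p - 1) * x ^ (p - 1)))) := by
        rw [h2p]; field_simp
    _ ≤ p * x ^ (p - 1) * (c / (2 * y ^ (p - 1))) := by gcongr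
    _ ≤ p * x ^ (p - 1) * (y - x) := by gcongr
    _ ≤ y ^ p - x ^ p := mul_rpow_sub_one_mul_sub_le_rpow_sub_rpow hx hy.le hp

end PowerIncrements

lemma add_mul_le_of_forall_le_sub_succ {u : ℕ → ℝ} {a : ℝ} (h : ∀ n, a ≤ u (n + 1) - u n)
    (n : ℕ) : u 0 + a * n ≤ u n := by
  induction n with
  | zero => simp
  | succ n ih => push_cast; linarith [h n]

lemma le_add_mul_of_forall_sub_succ_le {u : ℕ → ℝ} {b : ℝ} (h : ∀ n, u (n + 1) - u n ≤ b)
    (n : ℕ) : u n ≤ u 0 + b * n := by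
  induction n with
  | zero => simp
  | succ n ih => push_cast; linarith [h n]

lemma log_two_le_neg_log {x : ℝ} (hx : x ∈ Ioc (0 : ℝ) (1 / 2)) : log 2 ≤ -log x := by
  have := log_le_log hx.1 hx.2
  rw [one_div, log_inv] at this
  linarith

lemma neg_log_pos {x : ℝ} (hx : x ∈ Ioc (0 : ℝ) (1 / 2)) : 0 < -log x :=
  (log_pos one_lt_two).trans_le (log_two_le_neg_log hx)

lemma log_two_rpow_div_neg_log_rpow_mem_Ioc {β x : ℝ} (hβ : 0 ≤ β)
    (hx : x ∈ Ioc (0 : ℝ) (1 / 2)) : log 2 ^ β / (-log x) ^ β ∈ Ioc (0 : ℝ) 1 := by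
  have hlog2 : 0 < log 2 := log_pos one_lt_two
  have hden : 0 < (-log x) ^ β := rpow_pos_of_pos (neg_log_pos hx) β
  refine ⟨by positivity, ?_⟩
  rw [div_le_one hden]
  exact rpow_le_rpow hlog2.le (log_two_le_neg_log hx) hβ

lemma Tmap_of_mem_Ioc {γ x : ℝ} (hx : x ∈ Ioc (0 : ℝ) (1 / 2)) :
    Tmap γ x = x * (1 + log 2 ^ (1 / γ - 1) / (-log x) ^ (1 / γ - 1)) := by
  have hlog : log x < 0 := log_neg hx.1 (by linarith [hx.2])
  rw [Tmap, if_neg (not_le.2 hx.1), if_pos hx.2, abs_of_neg hlog]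

section Tmap

variable {γ : ℝ}

lemma Tmap_mem_Ioc_self_two_mul (hγ0 : 0 < γ) (hγ1 : γ ≤ 1) {x : ℝ}
    (hx : x ∈ Ioc (0 : ℝ) (1 / 2)) : Tmap γ x ∈ Ioc x (2 * x) := by
  obtain ⟨hr0, hr1⟩ :=
    log_two_rpow_div_neg_log_rpow_mem_Ioc (sub_nonneg.2 (one_le_one_div hγ0 hγ1)) hx
  rw [Tmap_of_mem_Ioc hx]
  constructor <;> nlinarith [hx.1]

lemma log_Tmap (hγ0 : 0 < γ) (hγ1 : γ ≤ 1) {x : ℝ} (hx : x ∈ Ioc (0 : ℝ) (1 / 2)) :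
    log (Tmap γ x) = log x + log (1 + log 2 ^ (1 / γ - 1) / (-log x) ^ (1 / γ - 1)) := by
  have hr := log_two_rpow_div_neg_log_rpow_mem_Ioc (sub_nonneg.2 (one_le_one_div hγ0 hγ1)) hx
  rw [Tmap_of_mem_Ioc hx, log_mul hx.1.ne' (by linarith [hr.1])]

lemma strictMonoOn_Tmap (hγ0 : 0 < γ) (hγ1 : γ ≤ 1) :
    StrictMonoOn (Tmap γ) (Ioc (0 : ℝ) (1 / 2)) := by
  intro x hx y hy hxy
  have hβ : 0 ≤ 1 / γ - 1 := sub_nonneg.2 (one_le_one_div hγ0 hγ1)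
  have hrx := log_two_rpow_div_neg_log_rpow_mem_Ioc hβ hx
  have hr : log 2 ^ (1 / γ - 1) / (-log x) ^ (1 / γ - 1)
      ≤ log 2 ^ (1 / γ - 1) / (-log y) ^ (1 / γ - 1) := by
    refine div_le_div_of_nonneg_left (by positivity) (rpow_pos_of_pos (neg_log_pos hy) _) ?_
    exact rpow_le_rpow (neg_log_pos hy).le (by linarith [log_le_log hx.1 hxy.le]) hβ
  rw [Tmap_of_mem_Ioc hx, Tmap_of_mem_Ioc hy]
  nlinarith [hrx.1, hx.1]

lemma Tmap_one_half : Tmap γ (1 / 2) = 1 := by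
  have hc : 0 < log 2 ^ (1 / γ - 1) := rpow_pos_of_pos (log_pos one_lt_two) _
  rw [Tmap_of_mem_Ioc (by norm_num), one_div 2, log_inv, neg_neg, div_self hc.ne']
  norm_num

lemma continuousOn_Tmap : ContinuousOn (Tmap γ) (Ioc (0 : ℝ) (1 / 2)) := by
  refine ContinuousOn.congr ?_ fun x hx ↦ Tmap_of_mem_Ioc (γ := γ) hx
  refine continuousOn_id.mul (continuousOn_const.add (continuousOn_const.div ?_ ?_))
  · exact (continuousOn_log.mono fun x hx ↦ hx.1.ne').neg.rpow_const
      fun x hx ↦ Or.inl (neg_log_pos hx).ne'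
  · exact fun x hx ↦ (rpow_pos_of_pos (neg_log_pos hx) _).ne'

lemma bijOn_Tmap (hγ0 : 0 < γ) (hγ1 : γ ≤ 1) :
    BijOn (Tmap γ) (Ioc (0 : ℝ) (1 / 2)) (Ioc (0 : ℝ) 1) := by
  refine ⟨fun x hx ↦ ?_, (strictMonoOn_Tmap hγ0 hγ1).injOn, fun t ht ↦ ?_⟩
  · have := Tmap_mem_Ioc_self_two_mul hγ0 hγ1 hx
    exact ⟨hx.1.trans this.1, by linarith [this.2, hx.2]⟩
  · have hsub : Icc (t / 2) (1 / 2) ⊆ Ioc (0 : ℝ) (1 / 2) :=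
      fun x hx ↦ ⟨by linarith [ht.1, hx.1], hx.2⟩
    have hlow : Tmap γ (t / 2) ≤ t := by
      have := (Tmap_mem_Ioc_self_two_mul hγ0 hγ1 (hsub ⟨le_rfl, by linarith [ht.2]⟩)).2
      linarith
    obtain ⟨x, hx, hTx⟩ := intermediate_value_Icc (by linarith [ht.2])
      (continuousOn_Tmap.mono hsub) ⟨hlow, Tmap_one_half.symm ▸ ht.2⟩
    exact ⟨x, hsub hx, hTx⟩

lemma rpow_neg_log_sub_rpow_neg_log_Tmap_mem_Icc (hγ0 : 0 < γ) (hγ1 : γ ≤ 1) {x : ℝ}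
    (hx : x ∈ Ioc (0 : ℝ) (1 / 2)) (hTx : Tmap γ x ≤ 1 / 2) :
    (-log x) ^ (1 / γ) - (-log (Tmap γ x)) ^ (1 / γ) ∈
      Icc (1 / γ * log 2 ^ (1 / γ - 1) / 2 ^ (1 / γ)) (1 / γ * log 2 ^ (1 / γ - 1)) := by
  have hp : 1 ≤ 1 / γ := one_le_one_div hγ0 hγ1
  have hTx' : Tmap γ x ∈ Ioc (0 : ℝ) (1 / 2) :=
    ⟨hx.1.trans (Tmap_mem_Ioc_self_two_mul hγ0 hγ1 hx).1, hTx⟩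
  obtain ⟨hr0, hr1⟩ := log_two_rpow_div_neg_log_rpow_mem_Ioc (β := 1 / γ - 1) (by linarith) hx
  set c := log 2 ^ (1 / γ - 1)
  set ℓ := -log x
  set ℓ' := -log (Tmap γ x)
  have hstep : ℓ - ℓ' = log (1 + c / ℓ ^ (1 / γ - 1)) := by
    simp only [ℓ, ℓ', log_Tmap hγ0 hγ1 hx]; ring
  have hℓ' : log 2 ≤ ℓ' := log_two_le_neg_log hTx'
  have hinc_nonneg : 0 ≤ ℓ - ℓ' := hstep ▸ log_nonneg (by linarith)
  have hinc_le_log_two : ℓ - ℓ' ≤ log 2 := hstep ▸ log_le_log (by linarith) (by linarith)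
  have hinc_le : ℓ - ℓ' ≤ c / ℓ ^ (1 / γ - 1) := by
    linarith [log_le_sub_one_of_pos (by linarith : 0 < 1 + c / ℓ ^ (1 / γ - 1))]
  have hinc_ge : c / (2 * ℓ ^ (1 / γ - 1)) ≤ ℓ - ℓ' := by
    have h := le_log_one_add_of_nonneg hr0.le
    rw [← hstep, div_le_iff₀ (by linarith)] at h
    rw [mul_comm, ← div_div]
    nlinarith [mul_le_mul_of_nonneg_left hr1 hinc_nonneg]
  have hℓ'0 : 0 < ℓ' := (log_pos one_lt_two).trans_le hℓ'
  exact ⟨le_rpow_sub_rpow_of_le_sub hℓ'0 (by linarith) (by linarith) hp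
      (by positivity) hinc_ge,
    rpow_sub_rpow_le_of_sub_le hℓ'0 (by linarith) hp hinc_le⟩

end Tmap

section PreimageSequence

variable {γ : ℝ} {y : ℕ → ℝ}

lemma preimage_seq_mem_Ioc (hy0 : y 0 = 1 / 2)
    (hrec : ∀ n : ℕ, y (n + 1) ∈ Ioc (0 : ℝ) (1 / 2) ∧ Tmap γ (y (n + 1)) = y n) (n : ℕ) :
    y n ∈ Ioc (0 : ℝ) (1 / 2) := by
  cases n with
  | zero => rw [hy0]; norm_num
  | succ n => exact (hrec n).1

lemma exists_mul_le_rpow_neg_log_preimage_seq_le_mul (hγ0 : 0 < γ) (hγ1 : γ ≤ 1)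
    (hy0 : y 0 = 1 / 2)
    (hrec : ∀ n : ℕ, y (n + 1) ∈ Ioc (0 : ℝ) (1 / 2) ∧ Tmap γ (y (n + 1)) = y n) :
    ∃ a b : ℝ, 0 < a ∧ a ≤ b ∧ ∀ n : ℕ, 1 ≤ n →
      a * n ≤ (-log (y n)) ^ (1 / γ) ∧ (-log (y n)) ^ (1 / γ) ≤ b * n := by
  set M : ℕ → ℝ := fun n ↦ (-log (y n)) ^ (1 / γ)
  have hM0 : 0 ≤ M 0 := rpow_nonneg (neg_log_pos (preimage_seq_mem_Ioc hy0 hrec 0)).le _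
  have hinc (n : ℕ) := (hrec n).2 ▸ rpow_neg_log_sub_rpow_neg_log_Tmap_mem_Icc hγ0 hγ1
    (hrec n).1 ((hrec n).2 ▸ (preimage_seq_mem_Ioc hy0 hrec n).2)
  set b := 1 / γ * log 2 ^ (1 / γ - 1)
  have hb : 0 < b := by positivity
  have ha : b / 2 ^ (1 / γ) ≤ b :=
    div_le_self hb.le (one_le_rpow one_le_two (by positivity))
  refine ⟨b / 2 ^ (1 / γ), M 0 + b, by positivity, by linarith, fun n hn ↦ ⟨?_, ?_⟩⟩
  · have := add_mul_le_of_forall_le_sub_succ (u := M) (fun n ↦ (hinc n).1) n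
    linarith
  · have := le_add_mul_of_forall_sub_succ_le (u := M) (fun n ↦ (hinc n).2) n
    have : (1 : ℝ) ≤ n := by exact_mod_cast hn
    nlinarith

end PreimageSequence

/-- `T` restricted to `(0, 1/2]` is a strictly increasing bijection onto `(0, 1]`; defining
`y_0 = 1/2` and `y_{n+1} ∈ (0, 1/2]` as the unique point with `T(y_{n+1}) = y_n`, there are
`υ1 ≥ υ2 > 0` such that `e^{-υ1 n^γ} ≤ y_n ≤ e^{-υ2 n^γ}` for every `n ≥ 1`. -/
theorem stmt4 (γ : ℝ) (hγ0 : 0 < γ) (hγ1 : γ ≤ 1) :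
    StrictMonoOn (Tmap γ) (Set.Ioc (0 : ℝ) (1 / 2)) ∧
    Set.BijOn (Tmap γ) (Set.Ioc (0 : ℝ) (1 / 2)) (Set.Ioc (0 : ℝ) 1) ∧
    ∀ y : ℕ → ℝ, y 0 = 1 / 2 →
      (∀ n : ℕ, y (n + 1) ∈ Set.Ioc (0 : ℝ) (1 / 2) ∧ Tmap γ (y (n + 1)) = y n) →
      ∃ υ1 υ2 : ℝ, 0 < υ2 ∧ υ2 ≤ υ1 ∧
        ∀ n : ℕ, 1 ≤ n →
          Real.exp (-υ1 * (n : ℝ) ^ γ) ≤ y n ∧ y n ≤ Real.exp (-υ2 * (n : ℝ) ^ γ) := by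
  refine ⟨strictMonoOn_Tmap hγ0 hγ1, bijOn_Tmap hγ0 hγ1, fun y hy0 hrec ↦ ?_⟩
  obtain ⟨a, b, ha, hab, hbounds⟩ :=
    exists_mul_le_rpow_neg_log_preimage_seq_le_mul hγ0 hγ1 hy0 hrec
  refine ⟨b ^ γ, a ^ γ, by positivity, rpow_le_rpow ha.le hab hγ0.le, fun n hn ↦ ?_⟩
  have hy := preimage_seq_mem_Ioc hy0 hrec n
  have hℓ : 0 ≤ -log (y n) := (neg_log_pos hy).le
  obtain ⟨hlow, hup⟩ := hbounds n hn
  rw [one_div] at hlow hup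
  rw [le_rpow_inv_iff_of_pos (by positivity) hℓ hγ0, mul_rpow ha.le n.cast_nonneg] at hlow
  have hb := ha.le.trans hab
  rw [rpow_inv_le_iff_of_pos hℓ (by positivity) hγ0, mul_rpow hb n.cast_nonneg] at hup
  rw [← exp_log hy.1]
  constructor <;> gcongr <;> linarith
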